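/- Let p ∈ ℝ⁴, and for e ∈ ℝ⁴ with ⟨e,p⟩ ≠ 0 define J_e(p)a := a − (⟨e,a⟩/⟨e,p⟩)·p for a ∈ ℝ⁴. Then for every fixed a ∈ ℝ⁴ and every direction b ∈ ℝ⁴, the derivative of the map e ↦ J_e(p)a satisfies: ⟨e,p⟩ · D_b( e ↦ J_e(p)a )(e) = −⟨b, J_e(p)a⟩ · p, at every e with ⟨e,p⟩ ≠ 0. (The identity (ep)∂_{e^λ} J_e(p)_μ{}^ν = −p_μ J_e(p)_λ{}^ν, equation (2.15), used throughout Sections 2–4.) -/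

import Mathlib

noncomputable section

/-- Minkowski bilinear form on ℝ⁴. -/
def mink (a b : Fin 4 → ℝ) : ℝ := a 0 * b 0 - a 1 * b 1 - a 2 * b 2 - a 3 * b 3

/-- The map `J_e(p): a ↦ a − (⟨e,a⟩/⟨e,p⟩)p` on ℝ⁴. -/
def Jep (p e a : Fin 4 → ℝ) : Fin 4 → ℝ :=
  fun i => a i - (mink e a / mink e p) * p i

lemma mink_add_smul_left (e b x : Fin 4 → ℝ) (t : ℝ) :
    mink (e + t • b) x = mink e x + t * mink b x := by
  simp only [mink, Pi.add_apply, Pi.smul_apply, smul_eq_mul]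
  ring

lemma mink_sub_smul_right (b a p : Fin 4 → ℝ) (c : ℝ) :
    mink b (a - c • p) = mink b a - c * mink b p := by
  simp only [mink, Pi.sub_apply, Pi.smul_apply, smul_eq_mul]
  ring

lemma Jep_eq_sub_smul (p e a : Fin 4 → ℝ) : Jep p e a = a - (mink e a / mink e p) • p :=
  rfl

lemma hasDerivAt_mink_add_smul_left (e b x : Fin 4 → ℝ) (t : ℝ) :
    HasDerivAt (fun s : ℝ => mink (e + s • b) x) (mink b x) t := by
  simp only [mink_add_smul_left]
  simpa using ((hasDerivAt_id t).mul_const (mink b x)).const_add (mink e x)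

lemma hasDerivAt_Jep_add_smul (p a b e : Fin 4 → ℝ) (hep : mink e p ≠ 0) :
    HasDerivAt (fun t : ℝ => Jep p (e + t • b) a) (-(mink b (Jep p e a) / mink e p) • p) 0 := by
  have hquot : HasDerivAt (fun t : ℝ => mink (e + t • b) a / mink (e + t • b) p)
      (mink b (Jep p e a) / mink e p) 0 := by
    refine ((hasDerivAt_mink_add_smul_left e b a 0).div
      (hasDerivAt_mink_add_smul_left e b p 0) (by simpa using hep)).congr_deriv ?_
    -- the quotient-rule numerator `⟨b,a⟩⟨e,p⟩ − ⟨e,a⟩⟨b,p⟩` is `⟨e,p⟩ ⟨b, J_e(p)a⟩`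
    rw [Jep_eq_sub_smul, mink_sub_smul_right]
    simp only [zero_smul, add_zero]
    field_simp
  exact ((hquot.smul_const p).const_sub a).congr_deriv (neg_smul _ _).symm

/-- Equation (2.15): `(ep)∂_{e^λ}J_e(p)_μ{}^ν = −p_μ J_e(p)_λ{}^ν`, stated as a directional
derivative in the string variable `e`. -/
theorem Jep_derivative (p : Fin 4 → ℝ) (a b : Fin 4 → ℝ) (e : Fin 4 → ℝ)
    (hep : mink e p ≠ 0) :
    mink e p • deriv (fun t : ℝ => Jep p (e + t • b) a) 0 =
      (-(mink b (Jep p e a))) • p := by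
  rw [(hasDerivAt_Jep_add_smul p a b e hep).deriv, smul_smul, mul_neg, mul_div_cancel₀ _ hep]
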